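/- limsup_{δ→0} limsup_{t→∞} (1/t)·log P(S_t ≤ δ) ≤ −r·P(ξ_1 > 0). -/

import Mathlib

/-!
Let `N_t` be the number of jumps up to time `t`. On `{N_t = m}` we have `τ_{m+1} > t` and
`ξ_1 + ⋯ + ξ_m = t S_t`, and `τ_{m+1}` is independent of the `ξ`'s. Chernoff bounds with a parameter
`0 ≤ θ < r` for the sum `τ_{m+1}` of `m + 1` exponentials and with `-l ≤ 0` for the `ξ`'s give
`P(N_t = m, S_t ≤ δ) ≤ (r / (r - θ))^{m+1} e^{-θt} · φ(l)^m e^{lδt}`, where `φ(l) = E e^{-lξ_1}`.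
For `θ < r (1 - φ(l))` the geometric series in `m` converges, so `P(S_t ≤ δ) ≤ C e^{(lδ - θ)t}`.
Letting `t → ∞`, `δ → 0`, `θ → r (1 - φ(l))` and finally `l → ∞`, where by dominated convergence
`φ(l) → P(ξ_1 = 0)`, yields the bound `-r P(ξ_1 > 0)`.
-/

open MeasureTheory ProbabilityTheory Filter Real Set
open scoped ENNReal Topology

namespace ProbabilityTheory

lemma expMeasure_eq_withDensity (r : ℝ) :
    expMeasure r = volume.withDensity (fun x ↦ ENNReal.ofReal (exponentialPDFReal r x)) := rfl

lemma ae_nonneg_expMeasure (r : ℝ) : ∀ᵐ x ∂expMeasure r, 0 ≤ x := by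
  rw [ae_iff, expMeasure, gammaMeasure]
  simp only [not_le]
  rw [Iio_def, withDensity_apply _ measurableSet_Iio]
  exact lintegral_gammaPDF_of_nonpos le_rfl

lemma exponentialPDFReal_mul_exp (r u x : ℝ) :
    exponentialPDFReal r x * exp (u * x) =
      (Ici 0).indicator (fun x ↦ r * exp ((u - r) * x)) x := by
  by_cases hx : 0 ≤ x
  · simp only [exponentialPDFReal, gammaPDFReal, hx, if_true, indicator_of_mem (mem_Ici.2 hx),
      Gamma_one, rpow_one, sub_self, rpow_zero]
    rw [div_one, mul_one, mul_assoc, ← exp_add]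
    ring_nf
  · simp [exponentialPDFReal, gammaPDFReal, hx]

lemma mgf_id_expMeasure {r u : ℝ} (hr : 0 < r) (hu : u < r) :
    mgf id (expMeasure r) u = r / (r - u) := by
  rw [mgf, expMeasure_eq_withDensity, integral_withDensity_eq_integral_toReal_smul
    (measurable_exponentialPDFReal r).ennreal_ofReal (by simp)]
  simp only [ENNReal.toReal_ofReal (exponentialPDFReal_nonneg hr _), smul_eq_mul, id,
    exponentialPDFReal_mul_exp]
  rw [integral_indicator measurableSet_Ici, integral_Ici_eq_integral_Ioi, integral_const_mul,
    integral_exp_mul_Ioi (by linarith), mul_zero, exp_zero, neg_div, mul_neg, mul_one_div,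
    ← div_neg, neg_sub]

variable {Ω : Type*} [MeasurableSpace Ω] {μ : Measure Ω}

lemma iIndepFun.indepFun_finsetSum_of_disjoint {ι : Type*} {X : ι → Ω → ℝ}
    (hindep : iIndepFun X μ) (hmeas : ∀ i, Measurable (X i)) {S T : Finset ι}
    (hST : Disjoint S T) : IndepFun (∑ i ∈ S, X i) (∑ i ∈ T, X i) μ := by
  have h := (hindep.indepFun_finset S T hST hmeas).comp
    (φ := fun v ↦ ∑ i, v i) (ψ := fun v ↦ ∑ i, v i) (by fun_prop) (by fun_prop)
  convert h using 1 <;> ext ω <;> simp only [Finset.sum_apply, Function.comp_apply,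
    Finset.univ_eq_attach, Finset.sum_attach _ fun i ↦ X i ω]

lemma mgf_sum_Icc_of_identDistrib {X : ℕ → Ω → ℝ} (hmeas : ∀ i, Measurable (X i))
    (hindep : iIndepFun X μ) (hident : ∀ i, 1 ≤ i → IdentDistrib (X i) (X 1) μ μ) (m : ℕ)
    (u : ℝ) : mgf (fun ω ↦ ∑ i ∈ Finset.Icc 1 m, X i ω) μ u = mgf (X 1) μ u ^ m := by
  rw [← Finset.sum_fn, hindep.mgf_sum hmeas, Finset.prod_eq_pow_card fun i hi ↦
    mgf_congr_of_identDistrib _ _ (hident i (Finset.mem_Icc.1 hi).1) u, Nat.card_Icc,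
    Nat.add_sub_cancel]

lemma tendsto_mgf_neg_atTop [IsProbabilityMeasure μ] {X : Ω → ℝ} (hX : Measurable X)
    (hX0 : ∀ ω, 0 ≤ X ω) :
    Tendsto (fun l ↦ mgf X μ (-l)) atTop (𝓝 (1 - μ.real {ω | 0 < X ω})) := by
  rw [← probReal_compl_eq_one_sub (measurableSet_lt measurable_const hX), compl_ofPred]
  simp only [not_lt]
  rw [← integral_indicator_one (measurableSet_le hX measurable_const)]
  refine tendsto_integral_filter_of_dominated_convergence (fun _ ↦ 1)
    (Eventually.of_forall fun l ↦ (hX.const_mul (-l)).exp.aestronglyMeasurable)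
    ((eventually_ge_atTop 0).mono fun l hl ↦ Eventually.of_forall fun ω ↦ ?_)
    (integrable_const 1) (Eventually.of_forall fun ω ↦ ?_)
  · rw [norm_of_nonneg (exp_nonneg _), exp_le_one_iff]
    nlinarith [hX0 ω]
  · rcases (hX0 ω).eq_or_lt with h | h
    · simp [← h]
    · have hω : ω ∉ {ω | X ω ≤ 0} := not_le.2 h
      rw [indicator_of_notMem hω]
      simp only [neg_mul]
      exact tendsto_exp_neg_atTop_nhds_zero.comp (tendsto_id.atTop_mul_const h)

end ProbabilityTheory

lemma limsup_le_of_eventually_le_of_tendsto {α : Type*} {F : Filter α} [F.NeBot]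
    {f : α → EReal} {g : α → ℝ} {L : ℝ} (h : ∀ᶠ x in F, f x ≤ g x) (hg : Tendsto g F (𝓝 L)) :
    limsup f F ≤ L :=
  (limsup_le_limsup h).trans_eq (EReal.tendsto_coe.2 hg).limsup_eq

lemma inv_mul_log_le_of_le_exp {A : ℝ≥0∞} {t C b : ℝ} (ht : 0 < t) (hC : 0 < C)
    (h : A ≤ ENNReal.ofReal (C * exp (b * t))) :
    ((1 / t : ℝ) : EReal) * ENNReal.log A ≤ ((Real.log C * (1 / t) + b : ℝ) : EReal) := by
  calc ((1 / t : ℝ) : EReal) * ENNReal.log A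
      ≤ ((1 / t : ℝ) : EReal) * ENNReal.log (ENNReal.ofReal (C * exp (b * t))) :=
        mul_le_mul_of_nonneg_left (ENNReal.log_le_log h) (by positivity)
    _ = ((Real.log C * (1 / t) + b : ℝ) : EReal) := by
        rw [ENNReal.log_ofReal_of_pos (by positivity), ← EReal.coe_mul,
          log_mul hC.ne' (by positivity), log_exp]
        congr 1
        field_simp

lemma limsup_inv_mul_log_le {f : ℝ → ℝ≥0∞} {C b : ℝ} (hC : 0 < C)
    (h : ∀ᶠ t in atTop, f t ≤ ENNReal.ofReal (C * exp (b * t))) :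
    limsup (fun t : ℝ ↦ ((1 / t : ℝ) : EReal) * ENNReal.log (f t)) atTop ≤ b := by
  refine limsup_le_of_eventually_le_of_tendsto
    ((h.and (eventually_gt_atTop 0)).mono fun t ht ↦ inv_mul_log_le_of_le_exp ht.2 hC ht.1) ?_
  simpa using (tendsto_inv_atTop_zero.const_mul (Real.log C)).add_const b

lemma exists_le_and_lt_succ {α : Type*} [LinearOrder α] {a : ℕ → α} {t : α} (h0 : a 0 ≤ t)
    (h : ∃ n, t < a n) : ∃ m, a m ≤ t ∧ t < a (m + 1) := by
  by_contra! hle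
  obtain ⟨n, hn⟩ := h
  have : ∀ m, a m ≤ t := fun m ↦ Nat.rec h0 (fun m hm ↦ hle m hm) m
  exact (this n).not_gt hn

lemma tsum_ite_le_eq_sum_Icc {α M : Type*} [LinearOrder α] [AddCommMonoid M]
    [TopologicalSpace M] {a : ℕ → α} {x : ℕ → M} (ha : Monotone a) {m : ℕ} {t : α}
    (hm : a m ≤ t) (hm' : t < a (m + 1)) :
    ∑' n, (if 1 ≤ n ∧ a n ≤ t then x n else 0) = ∑ n ∈ Finset.Icc 1 m, x n := by
  have hiff : ∀ n, (1 ≤ n ∧ a n ≤ t) ↔ n ∈ Finset.Icc 1 m := by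
    intro n
    rw [Finset.mem_Icc]
    refine and_congr_right fun _ ↦ ⟨fun hn ↦ ?_, fun hn ↦ (ha hn).trans hm⟩
    by_contra! hmn
    exact (hm'.trans_le (ha hmn)).not_ge hn
  rw [tsum_eq_sum (s := Finset.Icc 1 m) fun n hn ↦ if_neg ((hiff n).not.2 hn)]
  exact Finset.sum_congr rfl fun n hn ↦ if_pos ((hiff n).2 hn)

namespace CompoundPoisson

variable {Ω : Type*}

def jumpTime (σ : ℕ → Ω → ℝ) (n : ℕ) (ω : Ω) : ℝ := ∑ i ∈ Finset.Icc 1 n, σ i ω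

noncomputable def timeAverage (ξ σ : ℕ → Ω → ℝ) (t : ℝ) (ω : Ω) : ℝ :=
  (1 / t) * ∑' n : ℕ, if 1 ≤ n ∧ jumpTime σ n ω ≤ t then ξ n ω else 0

lemma monotone_jumpTime {σ : ℕ → Ω → ℝ} {ω : Ω} (hσ : ∀ n, 0 ≤ σ (n + 1) ω) :
    Monotone (jumpTime σ · ω) :=
  monotone_nat_of_le_succ fun n ↦ by
    simpa [jumpTime, Finset.sum_Icc_succ_top (Nat.le_add_left 1 n)] using hσ n

lemma exists_lt_jumpTime_and_sum_le {ξ σ : ℕ → Ω → ℝ} {ω : Ω} {t δ : ℝ}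
    (hσ : ∀ n, 0 ≤ σ (n + 1) ω) (hτ : ∃ n, t < jumpTime σ n ω) (ht : 0 < t)
    (hS : timeAverage ξ σ t ω ≤ δ) :
    ∃ m, t < jumpTime σ (m + 1) ω ∧ ∑ n ∈ Finset.Icc 1 m, ξ n ω ≤ δ * t := by
  obtain ⟨m, hm, hm'⟩ := exists_le_and_lt_succ (by simp [jumpTime, ht.le]) hτ
  refine ⟨m, hm', ?_⟩
  rw [timeAverage, tsum_ite_le_eq_sum_Icc (monotone_jumpTime hσ) hm hm', one_div,
    inv_mul_le_iff₀ ht] at hS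
  linarith

variable [MeasurableSpace Ω] {P : Measure Ω} {ξ σ : ℕ → Ω → ℝ} {r : ℝ}

lemma mgf_jumpTime (hr : 0 < r) (hσmeas : ∀ i, Measurable (σ i)) (hσindep : iIndepFun σ P)
    (hσexp : ∀ i, 1 ≤ i → P.map (σ i) = expMeasure r) {u : ℝ} (hu : u < r) (n : ℕ) :
    mgf (jumpTime σ n) P u = (r / (r - u)) ^ n := by
  have hident : ∀ i, 1 ≤ i → IdentDistrib (σ i) (σ 1) P P := fun i hi ↦
    ⟨(hσmeas i).aemeasurable, (hσmeas 1).aemeasurable, by rw [hσexp i hi, hσexp 1 le_rfl]⟩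
  refine (mgf_sum_Icc_of_identDistrib hσmeas hσindep hident n u).trans ?_
  rw [← mgf_id_map (hσmeas 1).aemeasurable, hσexp 1 le_rfl, mgf_id_expMeasure hr hu]

section JumpTimeTails

variable [IsProbabilityMeasure P]

lemma integrable_exp_mul_jumpTime (hr : 0 < r) (hσmeas : ∀ i, Measurable (σ i))
    (hσindep : iIndepFun σ P) (hσexp : ∀ i, 1 ≤ i → P.map (σ i) = expMeasure r) {u : ℝ}
    (hu : u < r) (n : ℕ) : Integrable (fun ω ↦ exp (u * jumpTime σ n ω)) P := by
  rw [← mgf_pos_iff, mgf_jumpTime hr hσmeas hσindep hσexp hu]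
  exact pow_pos (div_pos hr (sub_pos.2 hu)) n

lemma measure_lt_jumpTime_le (hr : 0 < r) (hσmeas : ∀ i, Measurable (σ i))
    (hσindep : iIndepFun σ P) (hσexp : ∀ i, 1 ≤ i → P.map (σ i) = expMeasure r) {θ : ℝ}
    (hθ : 0 ≤ θ) (hθr : θ < r) (t : ℝ) (n : ℕ) :
    P {ω | t < jumpTime σ n ω} ≤ ENNReal.ofReal (exp (-θ * t) * (r / (r - θ)) ^ n) := by
  refine (measure_mono (t := {ω | t ≤ jumpTime σ n ω}) fun _ ↦ le_of_lt (α := ℝ)).trans ?_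
  rw [← ofReal_measureReal, ← mgf_jumpTime hr hσmeas hσindep hσexp hθr n]
  gcongr
  exact measure_ge_le_exp_mul_mgf t hθ (integrable_exp_mul_jumpTime hr hσmeas hσindep hσexp hθr n)

lemma measure_jumpTime_le_le (hr : 0 < r) (hσmeas : ∀ i, Measurable (σ i))
    (hσindep : iIndepFun σ P) (hσexp : ∀ i, 1 ≤ i → P.map (σ i) = expMeasure r) {u : ℝ}
    (hu : 0 ≤ u) (t : ℝ) (n : ℕ) :
    P {ω | jumpTime σ n ω ≤ t} ≤ ENNReal.ofReal (exp (u * t) * (r / (r + u)) ^ n) := by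
  have hur : -u < r := by linarith
  rw [← ofReal_measureReal]
  gcongr
  have := measure_le_le_exp_mul_mgf t (neg_nonpos.2 hu)
    (integrable_exp_mul_jumpTime hr hσmeas hσindep hσexp hur n)
  rwa [mgf_jumpTime hr hσmeas hσindep hσexp hur, neg_neg, sub_neg_eq_add] at this

lemma ae_exists_lt_jumpTime (hr : 0 < r) (hσmeas : ∀ i, Measurable (σ i))
    (hσindep : iIndepFun σ P) (hσexp : ∀ i, 1 ≤ i → P.map (σ i) = expMeasure r) (t : ℝ) :
    ∀ᵐ ω ∂P, ∃ n, t < jumpTime σ n ω := by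
  have hq : r / (r + r) < 1 := (div_lt_one (by linarith)).2 (by linarith)
  have hlim : Tendsto (fun n : ℕ ↦ ENNReal.ofReal (exp (r * t) * (r / (r + r)) ^ n)) atTop
      (𝓝 0) := by
    simpa using ENNReal.tendsto_ofReal
      ((tendsto_pow_atTop_nhds_zero_of_lt_one (by positivity) hq).const_mul (exp (r * t)))
  rw [ae_iff]
  simp only [not_exists, not_lt]
  refine le_antisymm (ge_of_tendsto' hlim fun n ↦ ?_) bot_le
  exact (measure_mono fun ω (hω : ∀ n, jumpTime σ n ω ≤ t) ↦ hω n).trans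
    (measure_jumpTime_le_le hr hσmeas hσindep hσexp hr.le t n)

end JumpTimeTails

lemma ae_nonneg_of_map_eq_expMeasure (hσmeas : ∀ i, Measurable (σ i))
    (hσexp : ∀ i, 1 ≤ i → P.map (σ i) = expMeasure r) : ∀ᵐ ω ∂P, ∀ n, 0 ≤ σ (n + 1) ω :=
  ae_all_iff.2 fun n ↦ ae_of_ae_map (hσmeas _).aemeasurable
    ((hσexp _ (Nat.le_add_left 1 n)).symm ▸ ae_nonneg_expMeasure r)

lemma measure_sum_le_le [IsProbabilityMeasure P] (hξmeas : ∀ i, Measurable (ξ i))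
    (hξindep : iIndepFun ξ P) (hξnonneg : ∀ i ω, 0 ≤ ξ i ω)
    (hξident : ∀ i, 1 ≤ i → IdentDistrib (ξ i) (ξ 1) P P) {l : ℝ} (hl : 0 ≤ l) (a : ℝ)
    (m : ℕ) :
    P {ω | ∑ n ∈ Finset.Icc 1 m, ξ n ω ≤ a} ≤
      ENNReal.ofReal (exp (l * a) * mgf (ξ 1) P (-l) ^ m) := by
  have hint : Integrable (fun ω ↦ exp (-l * ∑ n ∈ Finset.Icc 1 m, ξ n ω)) P := by
    refine .of_bound (by fun_prop) 1 (Eventually.of_forall fun ω ↦ ?_)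
    rw [norm_of_nonneg (exp_nonneg _), exp_le_one_iff, neg_mul, neg_nonpos]
    exact mul_nonneg hl (Finset.sum_nonneg fun n _ ↦ hξnonneg n ω)
  rw [← ofReal_measureReal]
  gcongr
  have := measure_le_le_exp_mul_mgf a (neg_nonpos.2 hl) hint
  rwa [mgf_sum_Icc_of_identDistrib hξmeas hξindep hξident, neg_neg] at this

lemma indepFun_jumpTime_sum (hξmeas : ∀ i, Measurable (ξ i)) (hσmeas : ∀ i, Measurable (σ i))
    (hindep : iIndepFun (Sum.elim ξ σ) P) (k m : ℕ) :
    IndepFun (jumpTime σ k) (fun ω ↦ ∑ n ∈ Finset.Icc 1 m, ξ n ω) P := by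
  have h := hindep.indepFun_finsetSum_of_disjoint (Sum.forall.2 ⟨hξmeas, hσmeas⟩)
    (S := (Finset.Icc 1 k).map .inr) (T := (Finset.Icc 1 m).map .inl)
    (by simp [Finset.disjoint_left])
  convert h using 1 <;> ext ω <;> simp [jumpTime, Finset.sum_apply]

section TimeAverageTails

variable [IsProbabilityMeasure P]

lemma measure_timeAverage_le_tsum (hr : 0 < r) (hσmeas : ∀ i, Measurable (σ i))
    (hσindep : iIndepFun σ P) (hσexp : ∀ i, 1 ≤ i → P.map (σ i) = expMeasure r) {t : ℝ}
    (ht : 0 < t) (δ : ℝ) :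
    P {ω | timeAverage ξ σ t ω ≤ δ} ≤ ∑' m, P ({ω | t < jumpTime σ (m + 1) ω} ∩
      {ω | ∑ n ∈ Finset.Icc 1 m, ξ n ω ≤ δ * t}) := by
  refine (measure_mono_ae ?_).trans (measure_iUnion_le _)
  filter_upwards [ae_nonneg_of_map_eq_expMeasure hσmeas hσexp,
    ae_exists_lt_jumpTime hr hσmeas hσindep hσexp t] with ω hσ hτ hS
  obtain ⟨m, hm⟩ := exists_lt_jumpTime_and_sum_le hσ hτ ht hS
  exact mem_iUnion.2 ⟨m, hm⟩

lemma measure_timeAverage_le (hr : 0 < r) (hξmeas : ∀ i, Measurable (ξ i))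
    (hσmeas : ∀ i, Measurable (σ i)) (hξnonneg : ∀ i ω, 0 ≤ ξ i ω)
    (hξident : ∀ i, 1 ≤ i → IdentDistrib (ξ i) (ξ 1) P P)
    (hσexp : ∀ i, 1 ≤ i → P.map (σ i) = expMeasure r) (hindep : iIndepFun (Sum.elim ξ σ) P)
    {l θ : ℝ} (hl : 0 ≤ l) (hθ : 0 ≤ θ) (hθr : θ < r)
    (hρ : r / (r - θ) * mgf (ξ 1) P (-l) < 1) {t : ℝ} (ht : 0 < t) (δ : ℝ) :
    P {ω | timeAverage ξ σ t ω ≤ δ} ≤ ENNReal.ofReal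
      (r / (r - θ) * (1 - r / (r - θ) * mgf (ξ 1) P (-l))⁻¹ * exp ((l * δ - θ) * t)) := by
  have hξindep : iIndepFun ξ P := hindep.precomp (g := Sum.inl) Sum.inl_injective
  have hσindep : iIndepFun σ P := hindep.precomp (g := Sum.inr) Sum.inr_injective
  set M := r / (r - θ)
  set φ := mgf (ξ 1) P (-l)
  have hM : 0 < M := div_pos hr (sub_pos.2 hθr)
  have hMφ : 0 ≤ M * φ := mul_nonneg hM.le mgf_nonneg
  have hterm : ∀ m, P ({ω | t < jumpTime σ (m + 1) ω} ∩
      {ω | ∑ n ∈ Finset.Icc 1 m, ξ n ω ≤ δ * t}) ≤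
      ENNReal.ofReal (M * exp ((l * δ - θ) * t) * (M * φ) ^ m) := fun m ↦ calc
    _ = P {ω | t < jumpTime σ (m + 1) ω} * P {ω | ∑ n ∈ Finset.Icc 1 m, ξ n ω ≤ δ * t} :=
      (indepFun_jumpTime_sum hξmeas hσmeas hindep (m + 1) m).measure_inter_preimage_eq_mul
        (Ioi t) (Iic (δ * t)) measurableSet_Ioi measurableSet_Iic
    _ ≤ ENNReal.ofReal (exp (-θ * t) * M ^ (m + 1)) *
        ENNReal.ofReal (exp (l * (δ * t)) * φ ^ m) :=
      mul_le_mul' (measure_lt_jumpTime_le hr hσmeas hσindep hσexp hθ hθr t (m + 1))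
        (measure_sum_le_le hξmeas hξindep hξnonneg hξident hl (δ * t) m)
    _ = _ := by
      rw [← ENNReal.ofReal_mul (by positivity),
        show (l * δ - θ) * t = -θ * t + l * (δ * t) by ring, exp_add]
      ring_nf
  calc P {ω | timeAverage ξ σ t ω ≤ δ}
      ≤ ∑' m, ENNReal.ofReal (M * exp ((l * δ - θ) * t) * (M * φ) ^ m) :=
        (measure_timeAverage_le_tsum hr hσmeas hσindep hσexp ht δ).trans
          (ENNReal.tsum_le_tsum hterm)
    _ = ENNReal.ofReal (M * (1 - M * φ)⁻¹ * exp ((l * δ - θ) * t)) := by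
      rw [← ENNReal.ofReal_tsum_of_nonneg (fun m ↦ by positivity)
        ((summable_geometric_of_lt_one hMφ hρ).mul_left _), tsum_mul_left,
        tsum_geometric_of_lt_one hMφ hρ, mul_right_comm]

lemma limsup_log_measure_timeAverage_le (hr : 0 < r) (hξmeas : ∀ i, Measurable (ξ i))
    (hσmeas : ∀ i, Measurable (σ i)) (hξnonneg : ∀ i ω, 0 ≤ ξ i ω)
    (hξident : ∀ i, 1 ≤ i → IdentDistrib (ξ i) (ξ 1) P P)
    (hσexp : ∀ i, 1 ≤ i → P.map (σ i) = expMeasure r) (hindep : iIndepFun (Sum.elim ξ σ) P)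
    {l θ δ : ℝ} (hl : 0 ≤ l) (hδ : 0 ≤ δ) (hθ : θ < r * (1 - mgf (ξ 1) P (-l))) :
    limsup (fun t : ℝ ↦ ((1 / t : ℝ) : EReal) * ENNReal.log (P {ω | timeAverage ξ σ t ω ≤ δ}))
      atTop ≤ ((l * δ - θ : ℝ) : EReal) := by
  rcases le_or_gt θ 0 with hθ0 | hθ0
  · refine limsup_inv_mul_log_le one_pos ((eventually_ge_atTop 0).mono fun t ht ↦ ?_)
    rw [one_mul]
    refine prob_le_one.trans (ENNReal.one_le_ofReal.2 (one_le_exp (mul_nonneg ?_ ht)))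
    nlinarith
  · have hφ : 0 ≤ mgf (ξ 1) P (-l) := mgf_nonneg
    have hθr : θ < r := by nlinarith
    have hρ : r / (r - θ) * mgf (ξ 1) P (-l) < 1 := by
      rw [div_mul_eq_mul_div, div_lt_one (sub_pos.2 hθr)]
      linarith
    refine limsup_inv_mul_log_le
      (mul_pos (div_pos hr (sub_pos.2 hθr)) (inv_pos.2 (sub_pos.2 hρ)))
      ((eventually_gt_atTop 0).mono fun t ht ↦ ?_)
    exact measure_timeAverage_le hr hξmeas hσmeas hξnonneg hξident hσexp hindep hl hθ0.le hθr
      hρ ht δ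

end TimeAverageTails

end CompoundPoisson

theorem compoundPoisson_upper_bound_zero_general
    {Ω : Type*} [MeasurableSpace Ω] (P : Measure Ω) [IsProbabilityMeasure P]
    (ξ σ : ℕ → Ω → ℝ) (r : ℝ) (hr : 0 < r)
    (hξmeas : ∀ i, Measurable (ξ i))
    (hσmeas : ∀ i, Measurable (σ i))
    (hξnonneg : ∀ i ω, 0 ≤ ξ i ω)
    (hξident : ∀ i, 1 ≤ i → IdentDistrib (ξ i) (ξ 1) P P)
    (hσexp : ∀ i, 1 ≤ i → P.map (σ i) = ProbabilityTheory.expMeasure r)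
    (hindep : iIndepFun (Sum.elim ξ σ) P)
    (τ : ℕ → Ω → ℝ)
    (hτ : τ = fun (n : ℕ) (ω : Ω) => ∑ i ∈ Finset.Icc 1 n, σ i ω)
    (S : ℝ → Ω → ℝ)
    (hS : S = fun (t : ℝ) (ω : Ω) =>
      (1 / t) * ∑' n : ℕ, if 1 ≤ n ∧ τ n ω ≤ t then ξ n ω else 0)
    :
    Filter.limsup
      (fun δ : ℝ => Filter.limsup
        (fun t : ℝ => ((1 / t : ℝ) : EReal) *
          ENNReal.log (P {ω | S t ω ≤ δ})) atTop)
      (nhdsWithin 0 (Ioi 0)) ≤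
      ((-(r * (P {ω | 0 < ξ 1 ω}).toReal) : ℝ) : EReal) := by
  -- after substitution, `S t ω` is `CompoundPoisson.timeAverage ξ σ t ω` by definition
  subst hS hτ
  have hlim : Tendsto (fun l ↦ -(r * (1 - mgf (ξ 1) P (-l)))) atTop
      (𝓝 (-(r * (P {ω | 0 < ξ 1 ω}).toReal))) := by
    have h := tendsto_mgf_neg_atTop (μ := P) (hξmeas 1) (hξnonneg 1)
    simpa [measureReal_def] using ((h.const_sub 1).const_mul r).neg
  refine ge_of_tendsto (EReal.tendsto_coe.2 hlim) ((eventually_ge_atTop 0).mono fun l hl ↦ ?_)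
  refine ge_of_tendsto (EReal.tendsto_coe.2 ((tendsto_neg _).mono_left (nhdsWithin_le_nhds
    (s := Iio (r * (1 - mgf (ξ 1) P (-l))))))) (eventually_mem_nhdsWithin.mono fun θ hθ ↦ ?_)
  refine limsup_le_of_eventually_le_of_tendsto (eventually_mem_nhdsWithin.mono fun δ hδ ↦
    CompoundPoisson.limsup_log_measure_timeAverage_le hr hξmeas hσmeas hξnonneg hξident hσexp
      hindep hl (le_of_lt hδ) hθ) ?_
  simpa using tendsto_nhdsWithin_of_tendsto_nhds
    ((by fun_prop : Continuous fun δ : ℝ ↦ l * δ - θ).tendsto 0)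

/-- **Upper bound at zero for the compound Poisson family `(S t)`:**
`limsup_{δ → 0⁺} limsup_{t → ∞} (1/t) log P(S t ≤ δ) ≤ -r P(ξ₁ > 0)`. -/
theorem compoundPoisson_upper_bound_zero
    {Ω : Type*} [MeasurableSpace Ω] (P : Measure Ω) [IsProbabilityMeasure P]
    (ξ σ : ℕ → Ω → ℝ) (r : ℝ) (hr : 0 < r)
    (hξmeas : ∀ i, Measurable (ξ i))
    (hσmeas : ∀ i, Measurable (σ i))
    (hξnonneg : ∀ i ω, 0 ≤ ξ i ω)
    (hξident : ∀ i, 1 ≤ i → IdentDistrib (ξ i) (ξ 1) P P)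
    (hσexp : ∀ i, 1 ≤ i → P.map (σ i) = ProbabilityTheory.expMeasure r)
    (hindep : iIndepFun (Sum.elim ξ σ) P)
    (τ : ℕ → Ω → ℝ)
    (hτ : τ = fun (n : ℕ) (ω : Ω) => ∑ i ∈ Finset.Icc 1 n, σ i ω)
    (S : ℝ → Ω → ℝ)
    (hS : S = fun (t : ℝ) (ω : Ω) =>
      (1 / t) * ∑' n : ℕ, if 1 ≤ n ∧ τ n ω ≤ t then ξ n ω else 0)
    (Λ : EReal)
    (hΛdef : Λ = sInf {x : EReal |
      ∃ l : ℝ, x = (l : EReal) ∧ 0 < l ∧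
        ¬ Integrable (fun ω => Real.exp (l * ξ 1 ω)) P})
    (hΛpos : 0 < Λ)
    (hfin : ∀ l : ℝ, (l : EReal) < Λ →
      Integrable (fun ω => Real.exp (l * ξ 1 ω)) P)
    :
    Filter.limsup
      (fun δ : ℝ => Filter.limsup
        (fun t : ℝ => ((1 / t : ℝ) : EReal) *
          ENNReal.log (P {ω | S t ω ≤ δ})) atTop)
      (nhdsWithin 0 (Ioi 0)) ≤
      ((-(r * (P {ω | 0 < ξ 1 ω}).toReal) : ℝ) : EReal) :=
  compoundPoisson_upper_bound_zero_general P ξ σ r hr hξmeas hσmeas hξnonneg hξident hσexp hindep τ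
    hτ S hS
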